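/- arXiv:2510.07617 — 2 statements merged into one kernel-verified Lean document; each statement's English description precedes it below -/
import Mathlib

section
/- Let X be a set and T an overlap-free subset of ⟨X⟩\{1}. Then an element w of the free monoid ⟨X⟩ becomes right-invertible in ⟨X : i(T)⟩ (i.e., its image under the natural homomorphism has a right inverse) if and only if w is a product of nonempty initial substrings (prefixes, not necessarily proper) of elements of T. Dually, w becomes left-invertible in ⟨X : i(T)⟩ if and only if w is a product of nonempty final substrings (suffixes) of elements of T. -/
/-!
Orient the defining relations as the deletion rules `t i(t) → 1` and `i(t) t → 1` on words
over `X ⊔ T`. Overlap-freeness of `T` makes every critical pair of this rewriting system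
trivial, so it is confluent, and a word is `1` in `⟨X : i(T)⟩` exactly when it deletes to the
empty word. If `w v` deletes to the empty word, every deletion reaching into `w` uses a rule
`t i(t)` and removes a nonempty prefix of `t` from the end of what is left of `w`; so `w` is a
product of such prefixes. Conversely a prefix `p` of `t = p q` has the right inverse `q i(t)`.
Suffixes and left inverses are dual.
-/

namespace AdjoinInverses

variable {X : Type*}

/-- The embedding of the free monoid on `X` into the free monoid on `X ⊕ S`. -/
def emb (S : Set (FreeMonoid X)) : FreeMonoid X →* FreeMonoid (X ⊕ S) :=
  FreeMonoid.map Sum.inl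

/-- The generator `i(w)` corresponding to `w ∈ S`. -/
def igen (S : Set (FreeMonoid X)) (w : S) : FreeMonoid (X ⊕ S) :=
  FreeMonoid.of (Sum.inr w)

/-- The defining relations `w ⬝ i(w) = 1` and `i(w) ⬝ w = 1` for `w ∈ S`. -/
inductive InvRel (S : Set (FreeMonoid X)) : FreeMonoid (X ⊕ S) → FreeMonoid (X ⊕ S) → Prop
  | mul_inv (w : S) : InvRel S (emb S w.1 * igen S w) 1
  | inv_mul (w : S) : InvRel S (igen S w * emb S w.1) 1

/-- The congruence generated by the defining relations. -/
def invCon (S : Set (FreeMonoid X)) : Con (FreeMonoid (X ⊕ S)) := conGen (InvRel S)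

/-- The monoid `⟨X : i(S)⟩` obtained from the free monoid on `X` by universally
adjoining a two-sided inverse to each element of `S`. -/
def AdjInv (S : Set (FreeMonoid X)) : Type _ := (invCon S).Quotient

instance (S : Set (FreeMonoid X)) : Monoid (AdjInv S) := Con.monoid _

/-- The natural homomorphism `⟨X⟩ → ⟨X : i(S)⟩`. -/
def natHom (S : Set (FreeMonoid X)) : FreeMonoid X →* AdjInv S :=
  ((invCon S).mk').comp (emb S)

/-- The adjoined inverse `i(w)`, as an element of `⟨X : i(S)⟩`. -/
def invElt (S : Set (FreeMonoid X)) (w : S) : AdjInv S :=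
  (invCon S).mk' (igen S w)

/-- `S` and `S'` are inverse-equivalent: each element of `S'` becomes invertible in
`⟨X : i(S)⟩` and each element of `S` becomes invertible in `⟨X : i(S')⟩`. -/
def InvEquiv (S S' : Set (FreeMonoid X)) : Prop :=
  (∀ w ∈ S', IsUnit (natHom S w)) ∧ ∀ w ∈ S, IsUnit (natHom S' w)

/-- Two (nonidentity) elements of the free monoid overlap: one can be written `a*b`
and the other `b*c` with `b ≠ 1` and at most one of `a`, `c` equal to `1`. -/
def Overlap (u v : FreeMonoid X) : Prop :=
  ∃ a b c : FreeMonoid X, b ≠ 1 ∧ (a ≠ 1 ∨ c ≠ 1) ∧ u = a * b ∧ v = b * c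

/-- A set `T` is overlap-free if no pair of elements of `T` (distinct or not) overlap. -/
def OverlapFree (T : Set (FreeMonoid X)) : Prop :=
  ∀ u ∈ T, ∀ v ∈ T, ¬ Overlap u v

open List Relation

section Deletion

variable {α : Type*} (R : Set (List α))

def DeletionStep (u v : List α) : Prop :=
  ∃ a l b, l ∈ R ∧ u = a ++ l ++ b ∧ v = a ++ b

/-- Deleting either rule from an overlap `c ++ d ++ e` of `c ++ d` and `d ++ e` leaves the
same word. -/
structure TrivialCriticalPairs : Prop where
  eq_nil_of_infix : ∀ l₁ ∈ R, ∀ l₂ ∈ R, ∀ c e, l₁ = c ++ l₂ ++ e → c = [] ∧ e = []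
  eq_of_overlap : ∀ l₁ ∈ R, ∀ l₂ ∈ R, ∀ c d e, d ≠ [] → l₁ = c ++ d → l₂ = d ++ e → c = e

variable {R}

theorem DeletionStep.append_left {u v : List α} (h : DeletionStep R u v) (w : List α) :
    DeletionStep R (w ++ u) (w ++ v) := by
  obtain ⟨a, l, b, hl, rfl, rfl⟩ := h
  exact ⟨w ++ a, l, b, hl, by simp, by simp⟩

theorem DeletionStep.append_right {u v : List α} (h : DeletionStep R u v) (w : List α) :
    DeletionStep R (u ++ w) (v ++ w) := by
  obtain ⟨a, l, b, hl, rfl, rfl⟩ := h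
  exact ⟨a, l, b ++ w, hl, by simp, by simp⟩

theorem reflTransGen_deletionStep_append {u v x y : List α}
    (h : ReflTransGen (DeletionStep R) u v) (h' : ReflTransGen (DeletionStep R) x y) :
    ReflTransGen (DeletionStep R) (u ++ x) (v ++ y) :=
  (h.lift (· ++ x) fun _ _ hs => hs.append_right x).trans
    (h'.lift (v ++ ·) fun _ _ hs => hs.append_left v)

theorem eq_nil_of_reflTransGen_deletionStep_nil {v : List α}
    (h : ReflTransGen (DeletionStep R) [] v) : v = [] := by
  induction h with
  | refl => rfl
  | tail _ hs ih =>
    obtain ⟨a, l, b, -, h, rfl⟩ := hs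
    simp_all

theorem deletionStep_diamond_of_append_eq (hR : TrivialCriticalPairs R)
    {l₁ l₂ b₁ b₂ c : List α} (hl₁ : l₁ ∈ R) (hl₂ : l₂ ∈ R) (h : l₁ ++ b₁ = c ++ (l₂ ++ b₂)) :
    b₁ = c ++ b₂ ∨ ∃ w, DeletionStep R b₁ w ∧ DeletionStep R (c ++ b₂) w := by
  rcases append_eq_append_iff.mp h with ⟨m, rfl, hb₁⟩ | ⟨d, rfl, hd⟩
  · exact Or.inr ⟨m ++ b₂, ⟨m, l₂, b₂, hl₂, by simp [hb₁], rfl⟩,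
      ⟨[], l₁, m ++ b₂, hl₁, by simp, rfl⟩⟩
  rcases eq_or_ne d [] with rfl | hd_ne
  · rw [append_nil] at hl₁
    rw [nil_append] at hd
    exact Or.inr ⟨b₂, ⟨[], l₂, b₂, hl₂, by simp [hd], rfl⟩, ⟨[], c, b₂, hl₁, by simp, rfl⟩⟩
  left
  rcases append_eq_append_iff.mp hd with ⟨e, rfl, rfl⟩ | ⟨e, rfl, rfl⟩
  · obtain ⟨rfl, rfl⟩ := hR.eq_nil_of_infix _ hl₁ _ hl₂ c e (by simp)
    simp
  · rw [hR.eq_of_overlap _ hl₁ _ hl₂ c d e hd_ne rfl rfl]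

theorem deletionStep_diamond (hR : TrivialCriticalPairs R) {u v₁ v₂ : List α}
    (h₁ : DeletionStep R u v₁) (h₂ : DeletionStep R u v₂) :
    v₁ = v₂ ∨ ∃ w, DeletionStep R v₁ w ∧ DeletionStep R v₂ w := by
  obtain ⟨a₁, l₁, b₁, hl₁, rfl, rfl⟩ := h₁
  obtain ⟨a₂, l₂, b₂, hl₂, hu, rfl⟩ := h₂
  simp only [append_assoc] at hu
  rcases append_eq_append_iff.mp hu with ⟨c, rfl, h⟩ | ⟨c, rfl, h⟩
  · rcases deletionStep_diamond_of_append_eq hR hl₁ hl₂ h with rfl | ⟨w, hw₁, hw₂⟩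
    · simp
    · exact Or.inr ⟨a₁ ++ w, hw₁.append_left a₁, by simpa using hw₂.append_left a₁⟩
  · rcases deletionStep_diamond_of_append_eq hR hl₂ hl₁ h with rfl | ⟨w, hw₂, hw₁⟩
    · simp
    · exact Or.inr ⟨a₂ ++ w, by simpa using hw₁.append_left a₂, hw₂.append_left a₂⟩

theorem equivalence_join_deletionStep (hR : TrivialCriticalPairs R) :
    Equivalence (Join (ReflTransGen (DeletionStep R))) :=
  equivalence_join_reflTransGen fun _ _ _ hab hac =>
    (deletionStep_diamond hR hab hac).elim (fun h => ⟨_, .refl, h ▸ .refl⟩)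
      fun ⟨d, hbd, hcd⟩ => ⟨d, .single hbd, .single hcd⟩

def joinCon (hR : TrivialCriticalPairs R) : Con (FreeMonoid α) where
  r u v := Join (ReflTransGen (DeletionStep R)) u.toList v.toList
  iseqv := (equivalence_join_deletionStep hR).comap _
  mul' := by
    rintro _ _ _ _ ⟨d₁, hw, hx⟩ ⟨d₂, hy, hz⟩
    exact ⟨d₁ ++ d₂, reflTransGen_deletionStep_append hw hy,
      reflTransGen_deletionStep_append hx hz⟩

theorem reflTransGen_nil_of_conGen (hR : TrivialCriticalPairs R)
    {r : FreeMonoid α → FreeMonoid α → Prop} (hr : ∀ u v, r u v → u.toList ∈ R ∧ v = 1)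
    {u : FreeMonoid α} (h : conGen r u 1) : ReflTransGen (DeletionStep R) u.toList [] := by
  have hle : conGen r ≤ joinCon hR := Con.conGen_le.mpr fun x y hxy => by
    obtain ⟨hx, rfl⟩ := hr x y hxy
    exact ⟨[], .single ⟨[], x.toList, [], hx, by simp, rfl⟩, .refl⟩
  obtain ⟨d, hu, hd⟩ := hle h
  rwa [eq_nil_of_reflTransGen_deletionStep_nil hd] at hu

end Deletion

section Extraction

variable {I : Type*} {R : Set (List (X ⊕ I))}

/- Since every rule contains a letter outside `X`, a deletion that meets the `X`-prefix `w`
removes a final segment of it which is a prefix of the rule. -/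
theorem mem_closure_prefixes_of_reflTransGen (hR : ∀ l ∈ R, ∃ i, Sum.inr i ∈ l)
    {u : List (X ⊕ I)} (h : ReflTransGen (DeletionStep R) u []) {w : List X}
    {v : List (X ⊕ I)} (hu : u = w.map Sum.inl ++ v) :
    FreeMonoid.ofList w ∈ Submonoid.closure {p | ∃ l ∈ R, p.toList.map Sum.inl <+: l} := by
  induction h using ReflTransGen.head_induction_on generalizing w v with
  | refl =>
    obtain rfl : w = [] := (by simpa using hu : _ ∧ _).1
    exact Submonoid.one_mem _
  | head hs _ ih =>
    obtain ⟨a, l, b, hl, rfl, rfl⟩ := hs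
    rw [append_assoc] at hu
    rcases append_eq_append_iff.mp hu with ⟨m, hwm, hlb⟩ | ⟨c, rfl, rfl⟩
    · obtain ⟨w₁, w₂, rfl, rfl, rfl⟩ := map_eq_append_iff.mp hwm
      have hp : w₂.map Sum.inl <+: l := by
        refine (prefix_or_prefix_of_prefix (prefix_append l b)
          (hlb ▸ prefix_append _ v)).resolve_left fun hl' => ?_
        obtain ⟨i, hi⟩ := hR l hl
        simpa using hl'.subset hi
      rw [FreeMonoid.ofList_append]
      exact Submonoid.mul_mem _ (ih rfl) (Submonoid.subset_closure ⟨l, hl, by simpa using hp⟩)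
    · exact ih (v := c ++ b) (by simp)

theorem mem_closure_suffixes_of_reflTransGen (hR : ∀ l ∈ R, ∃ i, Sum.inr i ∈ l)
    {u : List (X ⊕ I)} (h : ReflTransGen (DeletionStep R) u []) {w : List X}
    {v : List (X ⊕ I)} (hu : u = v ++ w.map Sum.inl) :
    FreeMonoid.ofList w ∈ Submonoid.closure {q | ∃ l ∈ R, q.toList.map Sum.inl <:+ l} := by
  induction h using ReflTransGen.head_induction_on generalizing w v with
  | refl =>
    obtain rfl : w = [] := (by simpa using hu : _ ∧ _).2
    exact Submonoid.one_mem _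
  | head hs _ ih =>
    obtain ⟨a, l, b, hl, rfl, rfl⟩ := hs
    rcases append_eq_append_iff.mp hu with ⟨m, rfl, rfl⟩ | ⟨c, hal, hc⟩
    · exact ih (v := a ++ m) (by simp)
    · obtain ⟨w₁, w₂, rfl, rfl, rfl⟩ := map_eq_append_iff.mp hc
      have hq : w₁.map Sum.inl <:+ l := by
        refine (suffix_or_suffix_of_suffix (suffix_append a l)
          (hal ▸ suffix_append v _)).resolve_left fun hl' => ?_
        obtain ⟨i, hi⟩ := hR l hl
        simpa using hl'.subset hi
      rw [FreeMonoid.ofList_append]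
      exact Submonoid.mul_mem _ (Submonoid.subset_closure ⟨l, hl, by simpa using hq⟩) (ih rfl)

end Extraction

theorem exists_right_inv_of_mem_closure {M N : Type*} [Monoid M] [Monoid N] (f : M →* N)
    {S : Set M} (hS : ∀ s ∈ S, ∃ v, f s * v = 1) {w : M} (hw : w ∈ Submonoid.closure S) :
    ∃ v, f w * v = 1 := by
  induction hw using Submonoid.closure_induction with
  | mem s hs => exact hS s hs
  | one => exact ⟨1, by simp⟩
  | mul x y _ _ hx hy =>
    obtain ⟨u, hu⟩ := hx
    obtain ⟨v, hv⟩ := hy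
    exact ⟨v * u, by rw [map_mul, mul_assoc, ← mul_assoc (f y), hv, one_mul, hu]⟩

theorem exists_left_inv_of_mem_closure {M N : Type*} [Monoid M] [Monoid N] (f : M →* N)
    {S : Set M} (hS : ∀ s ∈ S, ∃ v, v * f s = 1) {w : M} (hw : w ∈ Submonoid.closure S) :
    ∃ v, v * f w = 1 := by
  induction hw using Submonoid.closure_induction with
  | mem s hs => exact hS s hs
  | one => exact ⟨1, by simp⟩
  | mul x y _ _ hx hy =>
    obtain ⟨u, hu⟩ := hx
    obtain ⟨v, hv⟩ := hy
    exact ⟨v * u, by rw [map_mul, mul_assoc, ← mul_assoc u, hu, one_mul, hv]⟩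

section InvRules

variable {T : Set (FreeMonoid X)}

/-- The relators `t i(t)` and `i(t) t`, as words over `X ⊕ T`. -/
def IsInvRule (t : T) (l : List (X ⊕ T)) : Prop :=
  l = t.1.toList.map Sum.inl ++ [Sum.inr t] ∨ l = Sum.inr t :: t.1.toList.map Sum.inl

variable (T) in
def invRules : Set (List (X ⊕ T)) := {l | ∃ t, IsInvRule t l}

theorem IsInvRule.inr_mem {t : T} {l : List (X ⊕ T)} (h : IsInvRule t l) : Sum.inr t ∈ l := by
  rcases h with rfl | rfl <;> simp

theorem exists_inr_mem_of_mem_invRules : ∀ l ∈ invRules T, ∃ t, Sum.inr t ∈ l :=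
  fun _ ⟨t, hl⟩ => ⟨t, hl.inr_mem⟩

theorem isInvRule_append_inr_cons_iff {t i : T} {a b : List (X ⊕ T)} :
    IsInvRule t (a ++ Sum.inr i :: b) ↔
      i = t ∧ (a = t.1.toList.map Sum.inl ∧ b = [] ∨ a = [] ∧ b = t.1.toList.map Sum.inl) := by
  constructor
  · rintro (h | h)
    · rcases eq_nil_or_concat b with rfl | ⟨b, x, rfl⟩
      · obtain ⟨rfl, h⟩ := append_inj' h rfl
        simp_all
      · have h' : (a ++ Sum.inr i :: b) ++ [x] = t.1.toList.map Sum.inl ++ [Sum.inr t] := by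
          simpa using h
        obtain ⟨h, -⟩ := append_inj' h' rfl
        simpa using congrArg (Sum.inr i ∈ ·) h
    · rcases a with _ | ⟨x, a⟩
      · simp_all
      · obtain ⟨-, h⟩ := cons_eq_cons.mp h
        simpa using congrArg (Sum.inr i ∈ ·) h
  · rintro ⟨rfl, ⟨rfl, rfl⟩ | ⟨rfl, rfl⟩⟩
    · exact Or.inl rfl
    · exact Or.inr rfl

theorem OverlapFree.eq_nil_of_toList_eq_append (hT : OverlapFree T) {t₁ t₂ : T}
    {x y z : List X} (hy : y ≠ []) (h₁ : t₁.1.toList = x ++ y) (h₂ : t₂.1.toList = y ++ z) :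
    x = [] ∧ z = [] := by
  by_contra hxz
  refine hT _ t₁.2 _ t₂.2 ⟨.ofList x, .ofList y, .ofList z, FreeMonoid.ofList.injective.ne hy,
    (not_and_or.mp hxz).imp FreeMonoid.ofList.injective.ne FreeMonoid.ofList.injective.ne, ?_, ?_⟩
  · rw [← FreeMonoid.ofList_append, ← h₁, FreeMonoid.ofList_toList]
  · rw [← FreeMonoid.ofList_append, ← h₂, FreeMonoid.ofList_toList]

theorem IsInvRule.eq_nil_of_infix {t₁ t₂ : T} {c l e : List (X ⊕ T)}
    (hl₁ : IsInvRule t₁ (c ++ l ++ e)) (hl₂ : IsInvRule t₂ l) : c = [] ∧ e = [] := by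
  obtain ⟨a, b, rfl⟩ := append_of_mem hl₂.inr_mem
  obtain ⟨-, h₂⟩ := isInvRule_append_inr_cons_iff.mp hl₂
  rw [show c ++ (a ++ Sum.inr t₂ :: b) ++ e = (c ++ a) ++ Sum.inr t₂ :: (b ++ e) by simp] at hl₁
  obtain ⟨rfl, h₁⟩ := isInvRule_append_inr_cons_iff.mp hl₁
  rcases h₂ with ⟨rfl, rfl⟩ | ⟨rfl, rfl⟩ <;> simp at h₁ <;> aesop

theorem IsInvRule.eq_of_overlap (hT : OverlapFree T) {t₁ t₂ : T} {c d e : List (X ⊕ T)}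
    (hl₁ : IsInvRule t₁ (c ++ d)) (hl₂ : IsInvRule t₂ (d ++ e)) (hd : d ≠ []) : c = e := by
  by_cases hinr : ∃ i, Sum.inr i ∈ d
  · obtain ⟨i, hi⟩ := hinr
    obtain ⟨d₁, d₂, rfl⟩ := append_of_mem hi
    rw [show c ++ (d₁ ++ Sum.inr i :: d₂) = (c ++ d₁) ++ Sum.inr i :: d₂ by simp] at hl₁
    rw [show d₁ ++ Sum.inr i :: d₂ ++ e = d₁ ++ Sum.inr i :: (d₂ ++ e) by simp] at hl₂
    obtain ⟨rfl, h₁⟩ := isInvRule_append_inr_cons_iff.mp hl₁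
    obtain ⟨rfl, h₂⟩ := isInvRule_append_inr_cons_iff.mp hl₂
    rcases h₂ with ⟨rfl, h₂⟩ | ⟨rfl, h₂⟩ <;> simp at h₁ h₂ <;> aesop
  -- Otherwise the overlap `d` lies inside the `X`-letters of both `t₁` and `t₂`.
  rw [not_exists] at hinr
  obtain ⟨c₁, c₂, rfl⟩ := append_of_mem <| (mem_append.mp hl₁.inr_mem).resolve_right (hinr t₁)
  obtain ⟨e₁, e₂, rfl⟩ := append_of_mem <| (mem_append.mp hl₂.inr_mem).resolve_left (hinr t₂)
  rw [show c₁ ++ Sum.inr t₁ :: c₂ ++ d = c₁ ++ Sum.inr t₁ :: (c₂ ++ d) by simp] at hl₁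
  rw [show d ++ (e₁ ++ Sum.inr t₂ :: e₂) = (d ++ e₁) ++ Sum.inr t₂ :: e₂ by simp] at hl₂
  obtain ⟨-, ⟨-, hcd⟩ | ⟨rfl, hcd⟩⟩ := isInvRule_append_inr_cons_iff.mp hl₁
  · exact absurd (append_eq_nil_iff.mp hcd).2 hd
  obtain ⟨-, ⟨hde, rfl⟩ | ⟨hde, -⟩⟩ := isInvRule_append_inr_cons_iff.mp hl₂
  swap
  · exact absurd (append_eq_nil_iff.mp hde).1 hd
  obtain ⟨x, y, hxy, rfl, rfl⟩ := map_eq_append_iff.mp hcd.symm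
  obtain ⟨y', z, hyz, hy', rfl⟩ := map_eq_append_iff.mp hde.symm
  obtain rfl := map_injective_iff.mpr Sum.inl_injective hy'
  obtain ⟨rfl, rfl⟩ := hT.eq_nil_of_toList_eq_append (by simpa using hd) hxy hyz
  obtain rfl : t₁ = t₂ := Subtype.ext <| FreeMonoid.toList.injective <| by simp [hxy, hyz]
  rfl

theorem trivialCriticalPairs_invRules (hT : OverlapFree T) :
    TrivialCriticalPairs (invRules T) where
  eq_nil_of_infix := by
    rintro l₁ ⟨t₁, hl₁⟩ l₂ ⟨t₂, hl₂⟩ c e rfl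
    exact hl₁.eq_nil_of_infix hl₂
  eq_of_overlap := by
    rintro l₁ ⟨t₁, hl₁⟩ l₂ ⟨t₂, hl₂⟩ c d e hd rfl rfl
    exact hl₁.eq_of_overlap hT hl₂ hd

theorem IsInvRule.eq_nil_or_prefix {t : T} {l : List (X ⊕ T)} (hl : IsInvRule t l)
    {p : List X} (hp : p.map Sum.inl <+: l) : p = [] ∨ p <+: t.1.toList := by
  rcases hl with rfl | rfl
  · rcases prefix_concat_iff.mp hp with h | h
    · simpa using congrArg (Sum.inr t ∈ ·) h
    · obtain ⟨p', hp', hpp'⟩ := prefix_map_iff.mp h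
      exact Or.inr (map_injective_iff.mpr Sum.inl_injective hpp' ▸ hp')
  · rcases prefix_cons_iff.mp hp with h | ⟨p', h, -⟩
    · exact Or.inl (map_eq_nil_iff.mp h)
    · simpa using congrArg (Sum.inr t ∈ ·) h

theorem IsInvRule.eq_nil_or_suffix {t : T} {l : List (X ⊕ T)} (hl : IsInvRule t l)
    {q : List X} (hq : q.map Sum.inl <:+ l) : q = [] ∨ q <:+ t.1.toList := by
  rcases hl with rfl | rfl
  · rcases suffix_concat_iff.mp hq with h | ⟨q', h, -⟩
    · exact Or.inl (map_eq_nil_iff.mp h)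
    · simpa using congrArg (Sum.inr t ∈ ·) h
  · rcases suffix_cons_iff.mp hq with h | h
    · simpa using congrArg (Sum.inr t ∈ ·) h
    · obtain ⟨q', hq', hqq'⟩ := suffix_map_iff.mp h
      exact Or.inr (map_injective_iff.mpr Sum.inl_injective hqq' ▸ hq')

theorem closure_rulePrefixes_le :
    Submonoid.closure {p : FreeMonoid X | ∃ l ∈ invRules T, p.toList.map Sum.inl <+: l} ≤
      Submonoid.closure {p | p ≠ 1 ∧ ∃ t ∈ T, ∃ q, t = p * q} := by
  refine le_trans (Submonoid.closure_mono ?_) (Submonoid.closure_insert_one _).le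
  rintro p ⟨l, ⟨t, hl⟩, hp⟩
  rcases eq_or_ne p 1 with rfl | hp₁
  · exact Set.mem_insert _ _
  rcases hl.eq_nil_or_prefix hp with h | ⟨q, hq⟩
  · exact absurd (FreeMonoid.toList.injective h) hp₁
  · exact Or.inr ⟨hp₁, t, t.2, .ofList q, FreeMonoid.toList.injective hq.symm⟩

theorem closure_ruleSuffixes_le :
    Submonoid.closure {q : FreeMonoid X | ∃ l ∈ invRules T, q.toList.map Sum.inl <:+ l} ≤
      Submonoid.closure {q | q ≠ 1 ∧ ∃ t ∈ T, ∃ p, t = p * q} := by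
  refine le_trans (Submonoid.closure_mono ?_) (Submonoid.closure_insert_one _).le
  rintro q ⟨l, ⟨t, hl⟩, hq⟩
  rcases eq_or_ne q 1 with rfl | hq₁
  · exact Set.mem_insert _ _
  rcases hl.eq_nil_or_suffix hq with h | ⟨p, hp⟩
  · exact absurd (FreeMonoid.toList.injective h) hq₁
  · exact Or.inr ⟨hq₁, t, t.2, .ofList p, FreeMonoid.toList.injective hp.symm⟩

theorem InvRel.toList_mem_invRules {u v : FreeMonoid (X ⊕ T)} (h : InvRel T u v) :
    u.toList ∈ invRules T ∧ v = 1 := by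
  rcases h with t | t
  · exact ⟨⟨t, Or.inl rfl⟩, rfl⟩
  · exact ⟨⟨t, Or.inr rfl⟩, rfl⟩

theorem reflTransGen_nil_of_mk'_eq_one (hT : OverlapFree T) {u : FreeMonoid (X ⊕ T)}
    (h : (invCon T).mk' u = 1) : ReflTransGen (DeletionStep (invRules T)) u.toList [] :=
  reflTransGen_nil_of_conGen (trivialCriticalPairs_invRules hT)
    (fun _ _ h => h.toList_mem_invRules) ((invCon T).eq.mp h)

theorem mem_closure_prefixes_of_natHom_mul_eq_one (hT : OverlapFree T) {w : FreeMonoid X}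
    {v : AdjInv T} (h : natHom T w * v = 1) :
    w ∈ Submonoid.closure {p | p ≠ 1 ∧ ∃ t ∈ T, ∃ q, t = p * q} := by
  obtain ⟨v, rfl⟩ := (invCon T).mk'_surjective v
  have hred := reflTransGen_nil_of_mk'_eq_one hT (u := emb T w * v) (by rwa [map_mul])
  exact closure_rulePrefixes_le <|
    mem_closure_prefixes_of_reflTransGen exists_inr_mem_of_mem_invRules hred rfl

theorem mem_closure_suffixes_of_mul_natHom_eq_one (hT : OverlapFree T) {w : FreeMonoid X}
    {v : AdjInv T} (h : v * natHom T w = 1) :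
    w ∈ Submonoid.closure {q | q ≠ 1 ∧ ∃ t ∈ T, ∃ p, t = p * q} := by
  obtain ⟨v, rfl⟩ := (invCon T).mk'_surjective v
  have hred := reflTransGen_nil_of_mk'_eq_one hT (u := v * emb T w) (by rwa [map_mul])
  exact closure_ruleSuffixes_le <|
    mem_closure_suffixes_of_reflTransGen exists_inr_mem_of_mem_invRules hred rfl

theorem natHom_mul_invElt (t : T) : natHom T t * invElt T t = 1 :=
  (invCon T).eq.mpr (.of _ _ (.mul_inv t))

theorem invElt_mul_natHom (t : T) : invElt T t * natHom T t = 1 :=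
  (invCon T).eq.mpr (.of _ _ (.inv_mul t))

end InvRules

theorem stmt6_general (X : Type*) (T : Set (FreeMonoid X))
    (hT : OverlapFree T) (w : FreeMonoid X) :
    ((∃ v, natHom T w * v = 1) ↔
      w ∈ Submonoid.closure {p : FreeMonoid X | p ≠ 1 ∧ ∃ t ∈ T, ∃ q, t = p * q}) ∧
    ((∃ v, v * natHom T w = 1) ↔
      w ∈ Submonoid.closure {q : FreeMonoid X | q ≠ 1 ∧ ∃ t ∈ T, ∃ p, t = p * q}) := by
  refine ⟨⟨fun ⟨_, hv⟩ => mem_closure_prefixes_of_natHom_mul_eq_one hT hv,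
    exists_right_inv_of_mem_closure _ ?_⟩,
    ⟨fun ⟨_, hv⟩ => mem_closure_suffixes_of_mul_natHom_eq_one hT hv,
    exists_left_inv_of_mem_closure _ ?_⟩⟩
  · rintro p ⟨-, t, ht, q, rfl⟩
    refine ⟨natHom T q * invElt T ⟨_, ht⟩, ?_⟩
    rw [← mul_assoc, ← map_mul]
    exact natHom_mul_invElt ⟨_, ht⟩
  · rintro q ⟨-, t, ht, p, rfl⟩
    refine ⟨invElt T ⟨_, ht⟩ * natHom T p, ?_⟩
    rw [mul_assoc, ← map_mul]
    exact invElt_mul_natHom ⟨_, ht⟩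

/-- an element `w` of `⟨X⟩` becomes right invertible in `⟨X : i(T)⟩` iff it
is a product of nonempty prefixes of elements of `T`; dually with suffixes. -/
theorem stmt6 (X : Type*) (T : Set (FreeMonoid X))
    (h1 : (1 : FreeMonoid X) ∉ T) (hT : OverlapFree T) (w : FreeMonoid X) :
    ((∃ v, natHom T w * v = 1) ↔
      w ∈ Submonoid.closure {p : FreeMonoid X | p ≠ 1 ∧ ∃ t ∈ T, ∃ q, t = p * q}) ∧
    ((∃ v, v * natHom T w = 1) ↔
      w ∈ Submonoid.closure {q : FreeMonoid X | q ≠ 1 ∧ ∃ t ∈ T, ∃ p, t = p * q}) :=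
  stmt6_general X T hT w

end AdjoinInverses
end

section
/- Let X be a set and T an overlap-free subset of ⟨X⟩\{1}. Then T is precisely the set of nonidentity elements w of ⟨X⟩ which become invertible in ⟨X : i(T)⟩ but admit no factorization w = uv into two nonidentity elements u, v of ⟨X⟩ both of which become invertible in ⟨X : i(T)⟩. -/
/-!
Every invertible word `w ≠ 1` of `⟨X⟩` has a prefix in `T`. To see this, let `⟨X : i(T)⟩` act on
the right on the reduced words over `X ⊔ i(T)`, those with no factor `t i(t)` or `i(t) t`; the
relation `t i(t) = 1` holds for this action because `T` is overlap-free. Then `w` acts bijectively.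
A reduced word sent to the empty word ends in `i(t) ρ` with `t = ρ π` for a nonempty prefix `π`
of `w`. If `ρ ≠ 1`, the empty word and `π i(t) ρ` would both be sent to `w`; so `t = π` divides `w`.

Invertible words are closed under left division by invertible words, hence an invertible word
without an invertible factorization is in `T`; conversely `t ∈ T` has none, since an element of
`T` that is a proper prefix of `t` overlaps `t`.
-/

namespace FreeMonoid

variable {α : Type*}

theorem mul_eq_mul_iff {a b c d : FreeMonoid α} :
    a * b = c * d ↔ (∃ e, c = a * e ∧ b = e * d) ∨ ∃ e, a = c * e ∧ d = e * b :=
  toList.injective.eq_iff.symm.trans List.append_eq_append_iff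

theorem dvd_iff_isPrefix {a b : FreeMonoid α} : a ∣ b ↔ a.toList <+: b.toList :=
  ⟨fun ⟨c, h⟩ => ⟨c.toList, by rw [h, toList_mul]⟩,
    fun ⟨c, h⟩ => ⟨ofList c, toList.injective h.symm⟩⟩

theorem dvd_mul_of_iff {a b : FreeMonoid α} {x : α} : a ∣ b * of x ↔ a = b * of x ∨ a ∣ b := by
  rw [dvd_iff_isPrefix, dvd_iff_isPrefix, ← toList.injective.eq_iff, toList_mul, toList_of]
  exact List.prefix_concat_iff

theorem eq_one_of_dvd_one {a : FreeMonoid α} (h : a ∣ 1) : a = 1 :=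
  have ⟨_, hc⟩ := h
  eq_one_of_mul_right' hc.symm

end FreeMonoid

namespace AdjoinInverses

open FreeMonoid Function

variable {X : Type*} {T : Set (FreeMonoid X)}

theorem OverlapFree.eq_of_dvd_mul (hT : OverlapFree T) {s t ρ : FreeMonoid X} (hs : s ∈ T)
    (ht : t ∈ T) (hρ : ¬ s ∣ ρ) (h : s ∣ ρ * t) : ρ = 1 ∧ s = t := by
  obtain ⟨c, hc⟩ := h
  rcases mul_eq_mul_iff.mp hc with ⟨e, rfl, rfl⟩ | ⟨e, rfl, -⟩
  · have he : e ≠ 1 := by rintro rfl; exact hρ ⟨1, by simp⟩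
    by_contra hne
    exact hT _ hs _ ht ⟨ρ, e, c, he, by grind, rfl, rfl⟩
  · exact absurd (dvd_mul_right s e) hρ

variable (T) in
/-- `(S, ρ)` with `S = [(σₖ, tₖ), …, (σ₁, t₁)]` stands for the word `σ₁ i(t₁) σ₂ ⋯ σₖ i(tₖ) ρ`:
the stack `S` is read from its top, next to the last run `ρ`. -/
abbrev RawForm := List (FreeMonoid X × T) × FreeMonoid X

/-- No factor `t i(t)` or `i(t) t` occurs. -/
def IsReduced : List (FreeMonoid X × T) → FreeMonoid X → Prop
  | [], _ => True
  | (σ, t) :: S, ρ => (¬ ∃ c, σ = c * t) ∧ ¬ (t : FreeMonoid X) ∣ ρ ∧ IsReduced S σ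

theorem IsReduced.not_dvd {S : List (FreeMonoid X × T)} {ρ : FreeMonoid X}
    (h : IsReduced S ρ) : ∀ q ∈ S.head?, ¬ (q.2 : FreeMonoid X) ∣ ρ := by
  rcases S with _ | ⟨⟨σ, t⟩, S⟩
  · simp
  · simpa using h.2.1

open Classical in
noncomputable def mulLetter (x : X) : RawForm T → RawForm T
  | ((σ, t) :: S, ρ) => if ρ * of x = t then (S, σ) else ((σ, t) :: S, ρ * of x)
  | ([], ρ) => ([], ρ * of x)

open Classical in
noncomputable def mulInv (t : T) : RawForm T → RawForm T
  | (S, ρ) => if h : ∃ c, ρ = c * t then (S, h.choose) else ((ρ, t) :: S, 1)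

theorem mulLetter_of_ne {x : X} {S : List (FreeMonoid X × T)} {ρ : FreeMonoid X}
    (h : ∀ q ∈ S.head?, ρ * of x ≠ q.2) : mulLetter x (S, ρ) = (S, ρ * of x) := by
  rcases S with _ | ⟨⟨σ, t⟩, S⟩
  · rfl
  · simp_all [mulLetter]

theorem mulLetter_of_eq {x : X} {σ ρ : FreeMonoid X} {t : T} {S : List (FreeMonoid X × T)}
    (h : ρ * of x = t) : mulLetter x ((σ, t) :: S, ρ) = (S, σ) :=
  if_pos h

theorem mulInv_of_eq {t : T} {S : List (FreeMonoid X × T)} {ρ c : FreeMonoid X}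
    (h : ρ = c * t) : mulInv t (S, ρ) = (S, c) := by
  have hc : ∃ c, ρ = c * t := ⟨c, h⟩
  rw [mulInv, dif_pos hc, mul_right_cancel (hc.choose_spec.symm.trans h)]

theorem mulInv_of_not {t : T} {S : List (FreeMonoid X × T)} {ρ : FreeMonoid X}
    (h : ¬ ∃ c, ρ = c * t) : mulInv t (S, ρ) = ((ρ, t) :: S, 1) :=
  dif_neg h

theorem isReduced_mulLetter {p : RawForm T} (h : uncurry IsReduced p) (x : X) :
    uncurry IsReduced (mulLetter x p) := by
  obtain ⟨_ | ⟨⟨σ, t⟩, S⟩, ρ⟩ := p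
  · trivial
  by_cases hx : ρ * of x = t
  · rw [mulLetter_of_eq hx]
    exact h.2.2
  · rw [mulLetter_of_ne (by simpa using hx)]
    refine ⟨h.1, ?_, h.2.2⟩
    rw [dvd_mul_of_iff]
    rintro (h' | h')
    exacts [hx h'.symm, h.2.1 h']

theorem isReduced_mulInv (h1 : (1 : FreeMonoid X) ∉ T) {p : RawForm T} (h : uncurry IsReduced p)
    (t : T) : uncurry IsReduced (mulInv t p) := by
  obtain ⟨S, ρ⟩ := p
  by_cases hρ : ∃ c, ρ = c * t
  · obtain ⟨c, rfl⟩ := hρ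
    rw [mulInv_of_eq rfl]
    rcases S with _ | ⟨⟨σ, s⟩, S⟩
    · trivial
    · exact ⟨h.1, fun hd => h.2.1 (hd.mul_right t), h.2.2⟩
  · rw [mulInv_of_not hρ]
    exact ⟨hρ, fun ht => h1 (eq_one_of_dvd_one ht ▸ t.2), h⟩

theorem coe_ne_one (h1 : (1 : FreeMonoid X) ∉ T) (t : T) : (t : FreeMonoid X) ≠ 1 :=
  ne_of_mem_of_not_mem t.2 h1

variable (T) in
abbrev NormalForm := {p : RawForm T // uncurry IsReduced p}

noncomputable def step (h1 : (1 : FreeMonoid X) ∉ T) : X ⊕ T → NormalForm T → NormalForm T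
  | .inl x, p => ⟨mulLetter x p.1, isReduced_mulLetter p.2 x⟩
  | .inr t, p => ⟨mulInv t p.1, isReduced_mulInv h1 p.2 t⟩

/-- `actHom h1 u` sends a reduced word `p` to the reduced form of `p u`. -/
noncomputable def actHom (h1 : (1 : FreeMonoid X) ∉ T) :
    FreeMonoid (X ⊕ T) →* (Function.End (NormalForm T))ᵐᵒᵖ :=
  FreeMonoid.lift fun a => .op (step h1 a)

noncomputable def act (h1 : (1 : FreeMonoid X) ∉ T) (u : FreeMonoid (X ⊕ T)) :
    NormalForm T → NormalForm T :=
  (actHom h1 u).unop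

section act

variable (h1 : (1 : FreeMonoid X) ∉ T)

theorem act_one (p : NormalForm T) : act h1 1 p = p := by
  rw [act, map_one]; rfl

theorem act_mul (u v : FreeMonoid (X ⊕ T)) (p : NormalForm T) :
    act h1 (u * v) p = act h1 v (act h1 u p) := by
  rw [act, map_mul]; rfl

theorem val_act_emb_of (x : X) (p : NormalForm T) :
    (act h1 (emb T (of x)) p).1 = mulLetter x p.1 :=
  rfl

theorem val_act_igen (t : T) (p : NormalForm T) : (act h1 (igen T t) p).1 = mulInv t p.1 :=
  rfl

theorem val_act_emb_of_not_dvd (w : FreeMonoid X) {p : NormalForm T}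
    {S : List (FreeMonoid X × T)} {ρ : FreeMonoid X} (hp : p.1 = (S, ρ))
    (hw : ∀ q ∈ S.head?, ¬ (q.2 : FreeMonoid X) ∣ ρ * w) :
    (act h1 (emb T w) p).1 = (S, ρ * w) := by
  induction w using FreeMonoid.inductionOn' generalizing p ρ with
  | one => rw [map_one, act_one, hp, mul_one]
  | of_mul x w ih =>
    have hstep : (act h1 (emb T (of x)) p).1 = (S, ρ * of x) := by
      rw [val_act_emb_of, hp]
      refine mulLetter_of_ne fun q hq hx => hw q hq ⟨w, ?_⟩
      rw [← hx, mul_assoc]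
    rw [map_mul, act_mul, ih hstep (by simpa only [mul_assoc] using hw), mul_assoc]

theorem val_act_emb_of_mul_eq {π : FreeMonoid X} (hπ : π ≠ 1) {p : NormalForm T}
    {σ ρ : FreeMonoid X} {t : T} {S : List (FreeMonoid X × T)} (hp : p.1 = ((σ, t) :: S, ρ))
    (ht : ρ * π = t) : (act h1 (emb T π) p).1 = (S, σ) := by
  induction π using FreeMonoid.inductionOn' generalizing p ρ with
  | one => exact absurd rfl hπ
  | of_mul x π ih =>
    rw [map_mul, act_mul]
    by_cases hπ1 : π = 1
    · subst hπ1
      rw [mul_one] at ht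
      rw [map_one, act_one, val_act_emb_of, hp]
      exact mulLetter_of_eq ht
    · have hx : ρ * of x ≠ t := fun hx => hπ1 (mul_eq_left.mp (by rw [mul_assoc, ht, hx]))
      refine ih hπ1 ?_ (by rw [mul_assoc, ht])
      rw [val_act_emb_of, hp]
      exact mulLetter_of_ne (by simpa using hx)

theorem act_igen_mul_emb (t : T) (p : NormalForm T) : act h1 (igen T t * emb T t) p = p := by
  obtain ⟨⟨S, ρ⟩, hred⟩ := p
  apply Subtype.ext
  rw [act_mul]
  by_cases hρ : ∃ c, ρ = c * t
  · obtain ⟨c, rfl⟩ := hρ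
    exact val_act_emb_of_not_dvd h1 _ (mulInv_of_eq rfl) hred.not_dvd
  · exact val_act_emb_of_mul_eq h1 (coe_ne_one h1 t) (mulInv_of_not hρ) (one_mul _)

theorem act_emb_mul_igen (hT : OverlapFree T) (t : T) (p : NormalForm T) :
    act h1 (emb T t * igen T t) p = p := by
  obtain ⟨⟨S, ρ⟩, hred⟩ := p
  apply Subtype.ext
  rw [act_mul, val_act_igen]
  by_cases hpop : ∀ q ∈ S.head?, ¬ (q.2 : FreeMonoid X) ∣ ρ * t
  · rw [val_act_emb_of_not_dvd h1 _ rfl hpop]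
    exact mulInv_of_eq rfl
  rcases S with _ | ⟨⟨σ, s⟩, S⟩
  · simp at hpop
  -- overlap-freeness forces the top letter `i(s)` to be `i(t)`, directly followed by `t`
  obtain ⟨rfl, hst⟩ := hT.eq_of_dvd_mul s.2 t.2 hred.2.1 (by simpa using hpop)
  obtain rfl : s = t := Subtype.ext hst
  rw [val_act_emb_of_mul_eq h1 (coe_ne_one h1 s) rfl (one_mul _)]
  exact mulInv_of_not hred.1

end act

theorem invCon_le_ker_actHom (h1 : (1 : FreeMonoid X) ∉ T) (hT : OverlapFree T) :
    invCon T ≤ Con.ker (actHom h1) := by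
  refine Con.conGen_le.mpr fun u v huv => (Con.ker_rel _).mpr ?_
  refine MulOpposite.unop_injective (funext fun p => ?_)
  cases huv with
  | mul_inv t => exact (act_emb_mul_igen h1 hT t p).trans (act_one h1 p).symm
  | inv_mul t => exact (act_igen_mul_emb h1 t p).trans (act_one h1 p).symm

theorem bijective_act_of_isUnit (h1 : (1 : FreeMonoid X) ∉ T) (hT : OverlapFree T)
    {w : FreeMonoid X} (hw : IsUnit (natHom T w)) : Bijective (act h1 (emb T w)) :=
  have hu : IsUnit (actHom h1 (emb T w)) := hw.map ((invCon T).lift _ (invCon_le_ker_actHom h1 hT))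
  (Equiv.Perm.equivUnitsEnd.symm hu.unop.unit).bijective

theorem exists_mem_dvd_of_bijective (h1 : (1 : FreeMonoid X) ∉ T) {w : FreeMonoid X}
    (hw : w ≠ 1) (hbij : Bijective (act h1 (emb T w))) : ∃ t ∈ T, t ∣ w := by
  obtain ⟨⟨⟨S, ρ⟩, hred⟩, hp⟩ := hbij.2 ⟨([], 1), trivial⟩
  have hpop : ∃ q ∈ S.head?, (q.2 : FreeMonoid X) ∣ ρ * w := by
    by_contra! h
    have hval := val_act_emb_of_not_dvd h1 w (p := ⟨(S, ρ), hred⟩) rfl h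
    rw [hp] at hval
    exact hw (eq_one_of_mul_left' (Prod.ext_iff.mp hval).2.symm)
  rcases S with _ | ⟨⟨σ, t⟩, S⟩
  · simp at hpop
  obtain ⟨c, hc⟩ : (t : FreeMonoid X) ∣ ρ * w := by simpa using hpop
  obtain ⟨π, ht, rfl⟩ | ⟨e, rfl, -⟩ := mul_eq_mul_iff.mp hc
  swap
  · exact absurd (dvd_mul_right _ e) hred.2.1
  have hπ : π ≠ 1 := by rintro rfl; exact hred.2.1 ⟨1, by simp [ht]⟩
  by_cases hρ : ρ = 1
  · exact ⟨t, t.2, c, by rw [ht, hρ, one_mul]⟩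
  -- otherwise `π i(t) ρ` and the empty word are distinct reduced words which `w = π c` sends to `w`
  have hred' : uncurry IsReduced ([(π, t)], ρ) := by
    refine ⟨fun ⟨d, hd⟩ => hρ ?_, hred.2.1, trivial⟩
    rw [ht, ← mul_assoc] at hd
    exact eq_one_of_mul_left' (mul_eq_right.mp hd.symm)
  have hsame := hbij.1 (a₁ := ⟨([], 1), trivial⟩) (a₂ := ⟨([(π, t)], ρ), hred'⟩) <| Subtype.ext <| by
    rw [val_act_emb_of_not_dvd h1 _ rfl (by simp), map_mul, act_mul,
      val_act_emb_of_not_dvd h1 c (val_act_emb_of_mul_eq h1 hπ rfl ht.symm) (by simp), one_mul]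
  exact absurd (congrArg (·.1.1) hsame) (by simp)

theorem exists_mem_dvd_of_isUnit (h1 : (1 : FreeMonoid X) ∉ T) (hT : OverlapFree T)
    {w : FreeMonoid X} (hw1 : w ≠ 1) (hw : IsUnit (natHom T w)) : ∃ t ∈ T, t ∣ w :=
  exists_mem_dvd_of_bijective h1 hw1 (bijective_act_of_isUnit h1 hT hw)

theorem isUnit_natHom_of_mem {t : FreeMonoid X} (ht : t ∈ T) : IsUnit (natHom T t) :=
  ⟨⟨natHom T t, invElt T ⟨t, ht⟩, (invCon T).eq.mpr (.of _ _ (.mul_inv ⟨t, ht⟩)),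
    (invCon T).eq.mpr (.of _ _ (.inv_mul ⟨t, ht⟩))⟩, rfl⟩

/-- `T` is precisely the set of nonidentity elements of `⟨X⟩` which become
invertible in `⟨X : i(T)⟩` but have no factorization into two nonidentity elements of
`⟨X⟩` becoming invertible in `⟨X : i(T)⟩`. -/
theorem stmt10 (X : Type*) (T : Set (FreeMonoid X))
    (h1 : (1 : FreeMonoid X) ∉ T) (hT : OverlapFree T) :
    T = {w : FreeMonoid X | w ≠ 1 ∧ IsUnit (natHom T w) ∧
      ¬∃ u v : FreeMonoid X, u ≠ 1 ∧ v ≠ 1 ∧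
        IsUnit (natHom T u) ∧ IsUnit (natHom T v) ∧ w = u * v} := by
  ext w
  constructor
  · intro hw
    refine ⟨ne_of_mem_of_not_mem hw h1, isUnit_natHom_of_mem hw, ?_⟩
    rintro ⟨u, v, hu1, hv1, hu, -, rfl⟩
    obtain ⟨t, ht, c, rfl⟩ := exists_mem_dvd_of_isUnit h1 hT hu1 hu
    exact hT t ht _ hw ⟨1, t, c * v, ne_of_mem_of_not_mem ht h1,
      .inr (mul_ne_one'.mpr (.inr hv1)), (one_mul t).symm, mul_assoc t c v⟩
  · rintro ⟨hw1, hw, hfact⟩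
    obtain ⟨t, ht, c, rfl⟩ := exists_mem_dvd_of_isUnit h1 hT hw1 hw
    obtain rfl | hc1 := eq_or_ne c 1
    · rwa [mul_one]
    have htu := isUnit_natHom_of_mem ht
    rw [map_mul, htu.mul_left_iff] at hw
    exact absurd ⟨t, c, ne_of_mem_of_not_mem ht h1, hc1, htu, hw, rfl⟩ hfact

end AdjoinInverses
end
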